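/- The polynomial f(x) = x^{14} + 2x^{13} + x^{12} − 4x^{10} − 8x^{9} − 10x^{8} − 13x^{7} − 10x^{6} − 8x^{5} − 4x^{4} + x^{2} + 2x + 1 is irreducible over ℚ, and for every complex root α of f, the number (α − 1)^{−1} is not an algebraic integer. -/

import Mathlib

/-!
Modulo `2`, `f41half` is the product of two irreducible septics, so a proper monic factor over `ℤ`
would have degree `7`. Modulo `3` it is an irreducible quartic times a degree-`10` polynomial all
of whose irreducible factors have degree at least `4`, and such a product has no divisor of
degree `7`. Irreducible factors of degree `≤ t` over `ZMod p` are ruled out by Bézout certificates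
for coprimality with `X ^ p ^ e - X`, `e ≤ t`.

If `(α - 1)⁻¹` were integral, reversing a monic equation for it would give `r ∈ ℤ[X]` with
`r (α - 1) = 0` and `r 0 = 1`. Since `f41half` is the minimal polynomial of `α`, it divides
`r (X - 1)`, and evaluating at `1` gives `f41half 1 = -49 ∣ 1`.
-/

open Polynomial

/-- The polynomial whose roots are the meridian eigenvalues coming from
`1/2`-surgery on the figure-eight knot. -/
noncomputable def f41half : Polynomial ℤ :=
  Polynomial.X ^ 14 + 2 * Polynomial.X ^ 13 + Polynomial.X ^ 12 - 4 * Polynomial.X ^ 10 -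
    8 * Polynomial.X ^ 9 - 10 * Polynomial.X ^ 8 - 13 * Polynomial.X ^ 7 -
    10 * Polynomial.X ^ 6 - 8 * Polynomial.X ^ 5 - 4 * Polynomial.X ^ 4 +
    Polynomial.X ^ 2 + 2 * Polynomial.X + 1

namespace Polynomial

section Field

variable {K : Type*} [Field K]

theorem natDegree_eq_zero_or_eq_of_dvd_irreducible {q d : K[X]} (hq : Irreducible q)
    (hd : d ∣ q) : d.natDegree = 0 ∨ d.natDegree = q.natDegree := by
  obtain ⟨e, rfl⟩ := hd
  obtain ⟨hd0, he0⟩ := mul_ne_zero_iff.1 hq.ne_zero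
  rw [natDegree_mul hd0 he0]
  rcases hq.isUnit_or_isUnit rfl with h | h
  · exact .inl (natDegree_eq_zero_of_isUnit h)
  · exact .inr (by rw [natDegree_eq_zero_of_isUnit h, add_zero])

theorem exists_dvd_natDegree_eq_of_dvd_irreducible_mul {q r d : K[X]} (hq : Irreducible q)
    (hr : r ≠ 0) (hd : d ∣ q * r) :
    ∃ e, e ∣ r ∧ (d.natDegree = e.natDegree ∨ d.natDegree = q.natDegree + e.natDegree) := by
  obtain ⟨d₁, e, hd₁, he, rfl⟩ := exists_dvd_and_dvd_of_dvd_mul hd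
  refine ⟨e, he, ?_⟩
  rw [natDegree_mul (ne_zero_of_dvd_ne_zero hq.ne_zero hd₁) (ne_zero_of_dvd_ne_zero hr he)]
  rcases natDegree_eq_zero_or_eq_of_dvd_irreducible hq hd₁ with h | h <;> rw [h] <;> omega

theorem natDegree_eq_zero_or_lt_of_dvd {r e : K[X]} {t : ℕ} (hr : r ≠ 0)
    (hfac : ∀ q, Irreducible q → q ∣ r → t < q.natDegree) (he : e ∣ r) :
    e.natDegree = 0 ∨ t < e.natDegree := by
  by_cases hu : IsUnit e
  · exact .inl (natDegree_eq_zero_of_isUnit hu)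
  have he0 := ne_zero_of_dvd_ne_zero hr he
  obtain ⟨q, hq, hqe⟩ := WfDvdMonoid.exists_irreducible_factor hu he0
  exact .inr ((hfac q hq (hqe.trans he)).trans_le (natDegree_le_of_dvd hqe he0))

theorem Monic.irreducible_of_lt_natDegree_of_irreducible_dvd {r : K[X]} {t : ℕ} (hr : r.Monic)
    (hpos : 0 < r.natDegree) (hdeg : r.natDegree ≤ 2 * t + 1)
    (hfac : ∀ q, Irreducible q → q ∣ r → t < q.natDegree) : Irreducible r := by
  have hr1 : r ≠ 1 := by rintro rfl; simp at hpos
  refine (hr.irreducible_iff_lt_natDegree_lt hr1).2 fun q _ hq hqr => ?_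
  rw [Finset.mem_Ioc] at hq
  rcases natDegree_eq_zero_or_lt_of_dvd hr.ne_zero hfac hqr with h | h <;> omega

end Field

theorem lt_natDegree_of_isCoprime_X_pow_card_pow_sub_X {k : Type*} [Field k] [Finite k]
    {q r : k[X]} {t : ℕ} (hcop : ∀ e ∈ Finset.Icc 1 t, IsCoprime r (X ^ Nat.card k ^ e - X))
    (hq : Irreducible q) (hqr : q ∣ r) : t < q.natDegree := by
  by_contra! h
  have hq_dvd := hq.natDegree_dvd_iff_dvd_X_pow_card_pow_sub_X.1 dvd_rfl
  exact hq.not_isUnit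
    ((hcop _ (Finset.mem_Icc.2 ⟨hq.natDegree_pos, h⟩)).isUnit_of_dvd' hqr hq_dvd)

theorem Monic.irreducible_of_isCoprime_X_pow_card_pow_sub_X {k : Type*} [Field k] [Finite k]
    {r : k[X]} {t : ℕ} (hr : r.Monic) (hpos : 0 < r.natDegree) (hdeg : r.natDegree ≤ 2 * t + 1)
    (hcop : ∀ e ∈ Finset.Icc 1 t, IsCoprime r (X ^ Nat.card k ^ e - X)) : Irreducible r :=
  hr.irreducible_of_lt_natDegree_of_irreducible_dvd hpos hdeg fun _ hq hqr =>
    lt_natDegree_of_isCoprime_X_pow_card_pow_sub_X hcop hq hqr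

theorem exists_aeval_eq_zero_coeff_zero_eq_one_of_isIntegral_inv {R K : Type*} [CommRing R]
    [Field K] [Algebra R K] {x : K} (hx : x ≠ 0) (h : IsIntegral R x⁻¹) :
    ∃ r : R[X], aeval x r = 0 ∧ r.coeff 0 = 1 := by
  obtain ⟨q, hq, hqx⟩ := h
  let _ := invertibleOfNonzero (inv_ne_zero hx)
  refine ⟨q.reverse, ?_, by rw [coeff_zero_reverse, hq.leadingCoeff]⟩
  have := (eval₂_reverse_eq_zero_iff (algebraMap R K) x⁻¹ q).2 hqx
  rwa [invOf_eq_inv, inv_inv] at this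

theorem isUnit_eval_of_isIntegral_inv_sub {R K : Type*} [CommRing R] [IsDomain R]
    [IsIntegrallyClosed R] [Field K] [Algebra R K] [Module.IsTorsionFree R K] {f : R[X]}
    (hmon : f.Monic) (hirr : Irreducible f) {α : K} (hα : aeval α f = 0) {c : R}
    (hαc : α ≠ algebraMap R K c) (h : IsIntegral R (α - algebraMap R K c)⁻¹) :
    IsUnit (f.eval c) := by
  obtain ⟨r, hr, hr0⟩ := exists_aeval_eq_zero_coeff_zero_eq_one_of_isIntegral_inv
    (sub_ne_zero.2 hαc) h
  have hint : IsIntegral R α := ⟨f, hmon, hα⟩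
  have hdvd : f ∣ r.comp (X - C c) :=
    ((minpoly.irreducible hint).dvd_symm hirr (minpoly.isIntegrallyClosed_dvd hint hα)).trans
      (minpoly.isIntegrallyClosed_dvd hint (by simpa [aeval_comp] using hr))
  refine isUnit_of_dvd_one ?_
  simpa [eval_comp, ← coeff_zero_eq_eval_zero, hr0] using eval_dvd (x := c) hdvd

end Polynomial

theorem f41half_monic : f41half.Monic := by unfold f41half; monicity!

theorem f41half_natDegree : f41half.natDegree = 14 := by unfold f41half; compute_degree!

theorem f41half_eval_one : f41half.eval 1 = -49 := by simp [f41half]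

namespace F41half

noncomputable def modTwoFactor₁ : (ZMod 2)[X] := X ^ 7 + X ^ 4 + X ^ 3 + X ^ 2 + 1

noncomputable def modTwoFactor₂ : (ZMod 2)[X] := X ^ 7 + X ^ 5 + X ^ 4 + X ^ 3 + 1

noncomputable def modThreeFactor₁ : (ZMod 3)[X] := X ^ 4 + X ^ 3 + X ^ 2 + X + 1

noncomputable def modThreeFactor₂ : (ZMod 3)[X] :=
  X ^ 10 + X ^ 9 + 2 * X ^ 8 + 2 * X ^ 7 + 2 * X ^ 6 + 2 * X ^ 4 + 2 * X ^ 3 + 2 * X ^ 2 + X + 1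

theorem map_modTwo : f41half.map (Int.castRingHom (ZMod 2)) = modTwoFactor₁ * modTwoFactor₂ := by
  simp only [f41half, modTwoFactor₁, modTwoFactor₂, Polynomial.map_add, Polynomial.map_sub,
    Polynomial.map_mul, Polynomial.map_pow, map_X, Polynomial.map_ofNat, Polynomial.map_one]
  reduce_mod_char
  ring_nf
  reduce_mod_char

theorem map_modThree :
    f41half.map (Int.castRingHom (ZMod 3)) = modThreeFactor₁ * modThreeFactor₂ := by
  simp only [f41half, modThreeFactor₁, modThreeFactor₂, Polynomial.map_add, Polynomial.map_sub,
    Polynomial.map_mul, Polynomial.map_pow, map_X, Polynomial.map_ofNat, Polynomial.map_one]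
  reduce_mod_char
  ring_nf
  reduce_mod_char

theorem modTwoFactor₁_natDegree : modTwoFactor₁.natDegree = 7 := by
  unfold modTwoFactor₁; compute_degree!

theorem modTwoFactor₂_natDegree : modTwoFactor₂.natDegree = 7 := by
  unfold modTwoFactor₂; compute_degree!

theorem modThreeFactor₁_natDegree : modThreeFactor₁.natDegree = 4 := by
  unfold modThreeFactor₁; compute_degree!

theorem modThreeFactor₂_natDegree : modThreeFactor₂.natDegree = 10 := by
  unfold modThreeFactor₂; compute_degree!

-- The Bézout certificates below come from the extended Euclidean algorithm over `ZMod p`.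

theorem modTwoFactor₁_irreducible : Irreducible modTwoFactor₁ := by
  refine Monic.irreducible_of_isCoprime_X_pow_card_pow_sub_X (t := 3)
    (by unfold modTwoFactor₁; monicity!) (by norm_num [modTwoFactor₁_natDegree])
    (by norm_num [modTwoFactor₁_natDegree]) fun e he => ?_
  rw [Nat.card_zmod]
  obtain ⟨h₁, h₃⟩ := Finset.mem_Icc.1 he
  interval_cases e
  · exact ⟨1, X ^ 5 + X ^ 4 + X ^ 3 + X, by unfold modTwoFactor₁; ring_nf; reduce_mod_char⟩
  · exact ⟨X ^ 3 + X + 1, X ^ 6 + X ^ 4 + X ^ 3 + X ^ 2 + X + 1,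
      by unfold modTwoFactor₁; ring_nf; reduce_mod_char⟩
  · exact ⟨X ^ 5 + X ^ 4 + X ^ 3 + X + 1, X ^ 4 + X ^ 3 + X ^ 2 + X + 1,
      by unfold modTwoFactor₁; ring_nf; reduce_mod_char⟩

theorem modTwoFactor₂_irreducible : Irreducible modTwoFactor₂ := by
  refine Monic.irreducible_of_isCoprime_X_pow_card_pow_sub_X (t := 3)
    (by unfold modTwoFactor₂; monicity!) (by norm_num [modTwoFactor₂_natDegree])
    (by norm_num [modTwoFactor₂_natDegree]) fun e he => ?_
  rw [Nat.card_zmod]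
  obtain ⟨h₁, h₃⟩ := Finset.mem_Icc.1 he
  interval_cases e
  · exact ⟨1, X ^ 5 + X ^ 4 + X ^ 2, by unfold modTwoFactor₂; ring_nf; reduce_mod_char⟩
  · exact ⟨X ^ 3 + X + 1, X ^ 6 + X ^ 3 + 1, by unfold modTwoFactor₂; ring_nf; reduce_mod_char⟩
  · exact ⟨X ^ 6 + X ^ 4 + X ^ 3 + X ^ 2 + 1, X ^ 5 + X,
      by unfold modTwoFactor₂; ring_nf; reduce_mod_char⟩

theorem modThreeFactor₁_irreducible : Irreducible modThreeFactor₁ := by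
  refine Monic.irreducible_of_isCoprime_X_pow_card_pow_sub_X (t := 2)
    (by unfold modThreeFactor₁; monicity!) (by norm_num [modThreeFactor₁_natDegree])
    (by norm_num [modThreeFactor₁_natDegree]) fun e he => ?_
  rw [Nat.card_zmod]
  obtain ⟨h₁, h₂⟩ := Finset.mem_Icc.1 he
  interval_cases e
  · exact ⟨2 * X ^ 2 + 2 * X + 1, X ^ 3 + 2 * X ^ 2 + 2 * X,
      by unfold modThreeFactor₁; ring_nf; reduce_mod_char⟩
  · exact ⟨X ^ 7 + X ^ 5 + X ^ 4 + X ^ 2 + 1, 2 * X ^ 2 + 2 * X + 1,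
      by unfold modThreeFactor₁; ring_nf; reduce_mod_char⟩

theorem lt_natDegree_of_irreducible_dvd_modThreeFactor₂ {q : (ZMod 3)[X]} (hq : Irreducible q)
    (hqr : q ∣ modThreeFactor₂) : 3 < q.natDegree := by
  refine lt_natDegree_of_isCoprime_X_pow_card_pow_sub_X (fun e he => ?_) hq hqr
  rw [Nat.card_zmod]
  obtain ⟨h₁, h₃⟩ := Finset.mem_Icc.1 he
  interval_cases e
  · exact ⟨1, 2 * X ^ 7 + 2 * X ^ 6 + X ^ 3 + 2 * X + 1,
      by unfold modThreeFactor₂; ring_nf; reduce_mod_char⟩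
  · exact ⟨2 * X ^ 8 + 2 * X ^ 5 + 2 * X ^ 4 + 2 * X ^ 3 + 2 * X ^ 2 + 2 * X + 1,
      X ^ 9 + X ^ 8 + 2 * X ^ 7 + X ^ 5 + X ^ 4 + 2 * X ^ 3 + X ^ 2,
      by unfold modThreeFactor₂; ring_nf; reduce_mod_char⟩
  · exact ⟨X ^ 26 + 2 * X ^ 25 + X ^ 23 + X ^ 22 + X ^ 21 + X ^ 20 + X ^ 19 + 2 * X ^ 17 +
        2 * X ^ 16 + 2 * X ^ 15 + X ^ 14 + 2 * X ^ 12 + 2 * X ^ 11 + X ^ 8 + 2 * X ^ 5 +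
        2 * X ^ 4 + X ^ 2 + 2 * X + 1,
      2 * X ^ 9 + 2 * X ^ 7 + 2 * X ^ 6 + X ^ 5 + X ^ 4 + X ^ 3 + X ^ 2 + 2 * X,
      by unfold modThreeFactor₂; ring_nf; reduce_mod_char⟩

theorem natDegree_of_dvd_map_modTwo {d : (ZMod 2)[X]}
    (hd : d ∣ f41half.map (Int.castRingHom (ZMod 2))) :
    d.natDegree = 0 ∨ d.natDegree = 7 ∨ d.natDegree = 14 := by
  rw [map_modTwo] at hd
  obtain ⟨e, he, hde⟩ := exists_dvd_natDegree_eq_of_dvd_irreducible_mul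
    modTwoFactor₁_irreducible modTwoFactor₂_irreducible.ne_zero hd
  have he' := natDegree_eq_zero_or_eq_of_dvd_irreducible modTwoFactor₂_irreducible he
  rw [modTwoFactor₁_natDegree] at hde
  rw [modTwoFactor₂_natDegree] at he'
  omega

theorem natDegree_ne_seven_of_dvd_map_modThree {d : (ZMod 3)[X]}
    (hd : d ∣ f41half.map (Int.castRingHom (ZMod 3))) : d.natDegree ≠ 7 := by
  rw [map_modThree] at hd
  have hr0 : modThreeFactor₂ ≠ 0 := by
    intro h; simpa [h] using modThreeFactor₂_natDegree
  obtain ⟨e, ⟨c, hc⟩, hde⟩ := exists_dvd_natDegree_eq_of_dvd_irreducible_mul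
    modThreeFactor₁_irreducible hr0 hd
  obtain ⟨he0, hc0⟩ := mul_ne_zero_iff.1 (hc ▸ hr0)
  have hec : e.natDegree + c.natDegree = 10 := by
    rw [← natDegree_mul he0 hc0, ← hc, modThreeFactor₂_natDegree]
  have he := natDegree_eq_zero_or_lt_of_dvd hr0
    (fun _ => lt_natDegree_of_irreducible_dvd_modThreeFactor₂) (Dvd.intro c hc.symm)
  have hc' := natDegree_eq_zero_or_lt_of_dvd hr0
    (fun _ => lt_natDegree_of_irreducible_dvd_modThreeFactor₂) (Dvd.intro_left e hc.symm)
  rw [modThreeFactor₁_natDegree] at hde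
  omega

end F41half

open F41half in
theorem f41half_irreducible : Irreducible f41half := by
  have hne : f41half ≠ 1 := fun h => by simpa [h] using f41half_natDegree
  refine (f41half_monic.irreducible_iff_lt_natDegree_lt hne).2 fun q hq hdeg hqf => ?_
  have h₂ := natDegree_of_dvd_map_modTwo (Polynomial.map_dvd _ hqf)
  have h₃ := natDegree_ne_seven_of_dvd_map_modThree (Polynomial.map_dvd _ hqf)
  rw [hq.natDegree_map] at h₂ h₃
  rw [f41half_natDegree, Finset.mem_Ioc] at hdeg
  omega

/-- `f41half` is irreducible over `ℚ`, and for every complex root `α` of it,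
`(α - 1)⁻¹` is not an algebraic integer. -/
theorem f41half_irreducible_and_not_integral :
    Irreducible (f41half.map (Int.castRingHom ℚ)) ∧
      ∀ α : ℂ, Polynomial.aeval α f41half = 0 → ¬ IsIntegral ℤ (α - 1)⁻¹ := by
  refine ⟨(IsPrimitive.Int.irreducible_iff_irreducible_map_cast f41half_monic.isPrimitive).1
    f41half_irreducible, fun α hα hint => ?_⟩
  have hα1 : α ≠ algebraMap ℤ ℂ 1 := by
    rintro rfl
    rw [aeval_algebraMap_apply, coe_aeval_eq_eval, f41half_eval_one] at hα
    norm_num at hα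
  have hunit := isUnit_eval_of_isIntegral_inv_sub f41half_monic f41half_irreducible hα hα1
    (by simpa using hint)
  rw [f41half_eval_one, Int.isUnit_iff] at hunit
  omega
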